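/- arXiv:2605.17567 — 7 statements merged into one kernel-verified Lean document; each statement's English description precedes it below -/
import Mathlib

section
/- Suppose the integers a, b, c, d satisfy d > c > b > a ≥ 2, they are pairwise coprime, and 1/a + 1/b + 1/c + 1/d = 1 + 1/(a·b·c·d). Then a = 2 and b = 3. -/
/-!
Both sides exceed 1, so the reciprocals must sum to more than 1. If `a ≥ 3` the sum is at most
`1/3 + 1/4 + 1/5 + 1/6 < 1`. So `a = 2`, and coprimality with `2` makes `b, c, d` odd; if `b ≠ 3`
then `b ≥ 5`, `c ≥ 7`, `d ≥ 9` and the sum is at most `1/2 + 1/5 + 1/7 + 1/9 < 1`.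
-/

lemma sum_one_div_le_of_le {a b c d p q r s : ℤ} (hp : 0 < p) (hq : 0 < q) (hr : 0 < r)
    (hs : 0 < s) (ha : p ≤ a) (hb : q ≤ b) (hc : r ≤ c) (hd : s ≤ d) :
    (1 : ℚ) / a + 1 / b + 1 / c + 1 / d ≤ 1 / p + 1 / q + 1 / r + 1 / s := by
  have key {x m : ℤ} (hm : 0 < m) (hx : m ≤ x) : (1 : ℚ) / x ≤ 1 / m :=
    one_div_le_one_div_of_le (by exact_mod_cast hm) (by exact_mod_cast hx)
  linarith [key hp ha, key hq hb, key hr hc, key hs hd]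

theorem stmt_1_general (a b c d : ℤ) (ha : 2 ≤ a) (hab : a < b) (hbc : b < c) (hcd : c < d)
    (hab' : Int.gcd a b = 1) (hac : Int.gcd a c = 1) (had : Int.gcd a d = 1)
    (heq : (1 : ℚ) / (a : ℚ) + 1 / (b : ℚ) + 1 / (c : ℚ) + 1 / (d : ℚ)
      = 1 + 1 / ((a : ℚ) * b * c * d)) :
    a = 2 ∧ b = 3 := by
  have one_lt_sum : 1 < (1 : ℚ) / a + 1 / b + 1 / c + 1 / d := by
    have hprod : (0 : ℤ) < a * b * c * d := mul_pos (mul_pos (mul_pos (by omega) (by omega))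
      (by omega)) (by omega)
    rw [heq]
    exact lt_add_of_pos_right 1 (one_div_pos.mpr (by exact_mod_cast hprod))
  have ha2 : a = 2 := by
    by_contra ha2
    exact absurd (one_lt_sum.trans_le (sum_one_div_le_of_le (p := 3) (q := 4) (r := 5) (s := 6)
      (by norm_num) (by norm_num) (by norm_num) (by norm_num)
      (by omega) (by omega) (by omega) (by omega))) (by norm_num)
  subst ha2
  have hb_odd := Int.odd_iff.mp <| Int.isCoprime_two_left.mp <| Int.isCoprime_iff_gcd_eq_one.mpr hab'
  have hc_odd := Int.odd_iff.mp <| Int.isCoprime_two_left.mp <| Int.isCoprime_iff_gcd_eq_one.mpr hac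
  have hd_odd := Int.odd_iff.mp <| Int.isCoprime_two_left.mp <| Int.isCoprime_iff_gcd_eq_one.mpr had
  refine ⟨rfl, ?_⟩
  by_contra hb3
  exact absurd (one_lt_sum.trans_le (sum_one_div_le_of_le (p := 2) (q := 5) (r := 7) (s := 9)
    (by norm_num) (by norm_num) (by norm_num) (by norm_num)
    le_rfl (by omega) (by omega) (by omega))) (by norm_num)

theorem stmt_1 (a b c d : ℤ) (ha : 2 ≤ a) (hab : a < b) (hbc : b < c) (hcd : c < d)
    (hab' : Int.gcd a b = 1) (hac : Int.gcd a c = 1) (had : Int.gcd a d = 1)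
    (hbc' : Int.gcd b c = 1) (hbd : Int.gcd b d = 1) (hcd' : Int.gcd c d = 1)
    (heq : (1 : ℚ) / (a : ℚ) + 1 / (b : ℚ) + 1 / (c : ℚ) + 1 / (d : ℚ)
      = 1 + 1 / ((a : ℚ) * b * c * d)) :
    a = 2 ∧ b = 3 :=
  stmt_1_general a b c d ha hab hbc hcd hab' hac had heq
end

section
/- There is no quadruple of integers (a,b,c,d) with c > b > a ≥ 2 and d ≥ 3 satisfying 1/a + 1/b + 1/c + (d+1)/(2d) = 2 + 1/(a·b·c·d) (as rational numbers). -/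
theorem stmt_3 :
    ¬ ∃ a b c d : ℤ, 2 ≤ a ∧ a < b ∧ b < c ∧ 3 ≤ d ∧
      (1 : ℚ) / (a : ℚ) + 1 / (b : ℚ) + 1 / (c : ℚ) + ((d : ℚ) + 1) / (2 * (d : ℚ))
        = 2 + 1 / ((a : ℚ) * b * c * d) := by
  rintro ⟨a, b, c, d, ha, hab, hbc, hd, heq⟩
  have hb : (3 : ℤ) ≤ b := by omega
  have hc : (4 : ℤ) ≤ c := by omega
  have haQ : (2 : ℚ) ≤ (a : ℚ) := by exact_mod_cast ha
  have hbQ : (3 : ℚ) ≤ (b : ℚ) := by exact_mod_cast hb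
  have hcQ : (4 : ℚ) ≤ (c : ℚ) := by exact_mod_cast hc
  have hdQ : (3 : ℚ) ≤ (d : ℚ) := by exact_mod_cast hd
  have h1 : (1 : ℚ) / a ≤ 1 / 2 := one_div_le_one_div_of_le (by norm_num) haQ
  have h2 : (1 : ℚ) / b ≤ 1 / 3 := one_div_le_one_div_of_le (by norm_num) hbQ
  have h3 : (1 : ℚ) / c ≤ 1 / 4 := one_div_le_one_div_of_le (by norm_num) hcQ
  have h4 : (1 : ℚ) / d ≤ 1 / 3 := one_div_le_one_div_of_le (by norm_num) hdQ
  have hd0 : (d : ℚ) ≠ 0 := by linarith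
  have hsplit : ((d : ℚ) + 1) / (2 * d) = 1 / 2 + (1 / 2) * (1 / d) := by
    field_simp
  have hpos : (0 : ℚ) < 1 / ((a : ℚ) * b * c * d) := by
    apply one_div_pos.mpr
    have : (0:ℚ) < (a:ℚ) := by linarith
    have : (0:ℚ) < (b:ℚ) := by linarith
    have : (0:ℚ) < (c:ℚ) := by linarith
    have : (0:ℚ) < (d:ℚ) := by linarith
    positivity
  rw [hsplit] at heq
  linarith
end

section
/- Suppose a, b, c, d are integers with c > b > a ≥ 2, d ≥ 3, and d·(3abc − 2ab − 2ac − 2bc) = abc − 2. Then 1/a + 1/b + 1/c > 4/3 (as rational numbers), and consequently a = 2. -/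
theorem stmt_5 (a b c d : ℤ) (ha : 2 ≤ a) (hab : a < b) (hbc : b < c) (hd : 3 ≤ d)
    (heq : d * (3 * a * b * c - 2 * a * b - 2 * a * c - 2 * b * c) = a * b * c - 2) :
    (1 : ℚ) / (a : ℚ) + 1 / (b : ℚ) + 1 / (c : ℚ) > 4 / 3 ∧ a = 2 := by
  have hb : 3 ≤ b := by linarith
  have hc : 4 ≤ c := by linarith
  have hab6 : (6 : ℤ) ≤ a * b := by nlinarith [mul_nonneg (by linarith : (0:ℤ) ≤ a - 2) (by linarith : (0:ℤ) ≤ b - 3)]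
  have habc : (22 : ℤ) ≤ a * b * c := by nlinarith [mul_nonneg (by linarith : (0:ℤ) ≤ a * b - 6) (by linarith : (0:ℤ) ≤ c - 4)]
  have hXpos : 0 < 3 * a * b * c - 2 * a * b - 2 * a * c - 2 * b * c := by
    by_contra h
    push_neg at h
    have hd0 : (0:ℤ) < d := by linarith
    nlinarith
  have hX : 3 * (3 * a * b * c - 2 * a * b - 2 * a * c - 2 * b * c) ≤ a * b * c - 2 := by
    calc 3 * (3 * a * b * c - 2 * a * b - 2 * a * c - 2 * b * c)
        ≤ d * (3 * a * b * c - 2 * a * b - 2 * a * c - 2 * b * c) := by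
          apply mul_le_mul_of_nonneg_right hd (le_of_lt hXpos)
      _ = a * b * c - 2 := heq
  -- so 8abc + 2 ≤ 6(ab+ac+bc)
  have key : 8 * (a * b * c) + 2 ≤ 6 * (a * b + a * c + b * c) := by linarith
  have ha0 : (0:ℚ) < (a:ℚ) := by exact_mod_cast (by linarith : (0:ℤ) < a)
  have hb0 : (0:ℚ) < (b:ℚ) := by exact_mod_cast (by linarith : (0:ℤ) < b)
  have hc0 : (0:ℚ) < (c:ℚ) := by exact_mod_cast (by linarith : (0:ℤ) < c)
  have hsum : (1 : ℚ) / (a : ℚ) + 1 / (b : ℚ) + 1 / (c : ℚ)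
      = ((b:ℚ) * c + a * c + a * b) / ((a:ℚ) * b * c) := by
    field_simp
  have hineq : (1 : ℚ) / (a : ℚ) + 1 / (b : ℚ) + 1 / (c : ℚ) > 4 / 3 := by
    rw [hsum, gt_iff_lt, div_lt_div_iff₀ (by norm_num) (by positivity)]
    have keyq : 8 * ((a:ℚ) * b * c) + 2 ≤ 6 * ((a:ℚ) * b + a * c + b * c) := by
      exact_mod_cast key
    nlinarith
  refine ⟨hineq, ?_⟩
  by_contra hne
  have ha3 : 3 ≤ a := by omega
  have hb4 : 4 ≤ b := by omega
  have hc5 : 5 ≤ c := by omega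
  nlinarith [mul_pos (mul_pos (by linarith : (0:ℤ) < a) (by linarith : (0:ℤ) < b)) (by linarith : (0:ℤ) < c),
    mul_nonneg (mul_nonneg (by linarith : (0:ℤ) ≤ a - 3) (by linarith : (0:ℤ) ≤ b)) (by linarith : (0:ℤ) ≤ c),
    mul_nonneg (mul_nonneg (by linarith : (0:ℤ) ≤ b - 4) (by linarith : (0:ℤ) ≤ a)) (by linarith : (0:ℤ) ≤ c),
    mul_nonneg (mul_nonneg (by linarith : (0:ℤ) ≤ c - 5) (by linarith : (0:ℤ) ≤ a)) (by linarith : (0:ℤ) ≤ b)]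
end

section
/- Call a quadruple of integers (a,b,u,v), with b > a ≥ 2 and u,v ≥ 2, admissible if: (1) a, b and uv−1 are pairwise coprime; (2) 1/a + 1/b + v/(uv−1) > 1 as rational numbers; (3) v·a·b − 1 = (uv−1)·(ab − a − b). If (a,b,u,v) is admissible and moreover (4) a + b + u + v = 4 + (v−1)·[ab − (u−1)·(ab − a − b)], then (a, b, uv−1) equals (5,7,3), (4,11,3) or (2,7,11). -/
/-- A quadruple of integers `(a,b,u,v)` with `b > a ≥ 2` and `u,v ≥ 2` is *admissible* if
`a`, `b` and `uv - 1` are pairwise coprime, `1/a + 1/b + v/(uv-1) > 1` as rational numbers,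
and `vab - 1 = (uv-1)(ab - a - b)`. -/
def Admissible (a b u v : ℤ) : Prop :=
  2 ≤ a ∧ a < b ∧ 2 ≤ u ∧ 2 ≤ v ∧
  Int.gcd a b = 1 ∧ Int.gcd a (u * v - 1) = 1 ∧ Int.gcd b (u * v - 1) = 1 ∧
  (1 : ℚ) / (a : ℚ) + 1 / (b : ℚ) + (v : ℚ) / ((u : ℚ) * v - 1) > 1 ∧
  v * a * b - 1 = (u * v - 1) * (a * b - a - b)

theorem stmt_7 (a b u v : ℤ) (hadm : Admissible a b u v)
    (h4 : a + b + u + v = 4 + (v - 1) * (a * b - (u - 1) * (a * b - a - b))) :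
    (a = 5 ∧ b = 7 ∧ u * v - 1 = 3) ∨ (a = 4 ∧ b = 11 ∧ u * v - 1 = 3) ∨
      (a = 2 ∧ b = 7 ∧ u * v - 1 = 11) := by
  obtain ⟨ha, hab, hu, hv, g1, g2, g3, hq, h3⟩ := hadm
  have key : 2*(a+b-1) = (u+v-3)*(a*b-a-b-1) := by linear_combination h3 + h4
  have hm : 1 ≤ u + v - 3 := by omega
  have hc0 : 0 ≤ a*b-a-b-1 := by nlinarith
  have hc1 : 1 ≤ a*b-a-b-1 := by
    rcases eq_or_lt_of_le hc0 with h|h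
    · exfalso
      have h0 : 2*(a+b-1) = 0 := by rw [key, ← h]; ring
      omega
    · omega
  have h1 : a*b-a-b-1 ≤ 2*(a+b-1) := by
    nlinarith [key, mul_nonneg (show (0:ℤ) ≤ u+v-3-1 by omega) hc0]
  have ha5 : a ≤ 5 := by
    by_contra h6
    nlinarith [h1, mul_nonneg (show (0:ℤ) ≤ a-6 by omega) (show (0:ℤ) ≤ b-7 by omega)]
  interval_cases a
  · -- a = 2
    have hd1 : (b-3) ∣ 2*(b+1) := ⟨u+v-3, by linear_combination key⟩
    have hd2 : (b-3) ∣ 2*(b-3) := ⟨2, by ring⟩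
    have hd : (b-3) ∣ 8 := by
      have h8 : (8:ℤ) = 2*(b+1) - 2*(b-3) := by ring
      rw [h8]; exact dvd_sub hd1 hd2
    have hb : b ≤ 11 := by
      have := Int.le_of_dvd (by norm_num) hd
      omega
    interval_cases b
    · omega
    · exact absurd g1 (by decide)
    · -- b = 5
      have hs : u + v = 9 := by omega
      have hv7 : v ≤ 7 := by omega
      interval_cases v <;> omega
    · exact absurd g1 (by decide)
    · -- b = 7
      have hs : u + v = 7 := by omega
      have hv5 : v ≤ 5 := by omega
      interval_cases v <;> omega
    · exact absurd g1 (by decide)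
    · -- b = 9
      exact absurd hd (by decide)
    · exact absurd g1 (by decide)
    · -- b = 11
      have hs : u + v = 6 := by omega
      have hv4 : v ≤ 4 := by omega
      interval_cases v <;> omega
  · -- a = 3
    have hkey2 : 2*(b+2) = 2*((b-2)*(u+v-3)) := by linear_combination key
    have hkey3 : b+2 = (b-2)*(u+v-3) := by
      have := mul_left_cancel₀ (show (2:ℤ) ≠ 0 by norm_num) hkey2
      exact this
    have hd1 : (b-2) ∣ (b+2) := ⟨u+v-3, hkey3⟩
    have hd : (b-2) ∣ 4 := by
      have h8 : (4:ℤ) = (b+2) - (b-2) := by ring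
      rw [h8]; exact dvd_sub hd1 dvd_rfl
    have hb : b ≤ 6 := by
      have := Int.le_of_dvd (by norm_num) hd
      omega
    interval_cases b
    · -- b = 4
      have hs : u + v = 6 := by omega
      have hv4 : v ≤ 4 := by omega
      interval_cases v <;> omega
    · -- b = 5
      exact absurd hd (by decide)
    · exact absurd g1 (by decide)
  · -- a = 4
    have hb : b ≤ 11 := by nlinarith [h1]
    interval_cases b
    · -- b=5
      omega
    · exact absurd g1 (by decide)
    · omega
    · exact absurd g1 (by decide)
    · omega
    · exact absurd g1 (by decide)
    · -- b = 11
      have hs : u + v = 4 := by omega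
      have hv2 : v ≤ 2 := by omega
      interval_cases v <;> omega
  · -- a = 5
    have hb : b ≤ 7 := by nlinarith [h1]
    interval_cases b
    · omega
    · -- b = 7
      have hs : u + v = 4 := by omega
      have hv2 : v ≤ 2 := by omega
      interval_cases v <;> omega
end

section
/- Call a quadruple of integers (a,b,u,v), with b > a ≥ 2 and u,v ≥ 2, admissible if: (1) a, b and uv−1 are pairwise coprime; (2) 1/a + 1/b + v/(uv−1) > 1 as rational numbers; (3) v·a·b − 1 = (uv−1)·(ab − a − b). If (a,b,u,v) is admissible then u ∈ {2, 3, 6}; moreover, if u = 6 then a = 2 and b = 3. -/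
theorem stmt_9 (a b u v : ℤ) (hadm : Admissible a b u v) :
    (u = 2 ∨ u = 3 ∨ u = 6) ∧ (u = 6 → a = 2 ∧ b = 3) := by
  obtain ⟨ha, hab, hu, hv, hg1, hg2, hg3, _, heq⟩ := hadm
  have hb : 3 ≤ b := by omega
  have hM1 : 1 ≤ a * b - a - b := by nlinarith
  have hk : v * (u * (a * b - a - b) - a * b) = (a * b - a - b) - 1 := by
    linear_combination -heq
  have hk0 : 0 ≤ u * (a * b - a - b) - a * b := by nlinarith
  have h2k : 2 * (u * (a * b - a - b) - a * b) ≤ (a * b - a - b) - 1 := by nlinarith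
  rcases eq_or_lt_of_le hM1 with hM | hM
  · -- M = 1 case
    have hkz : u * (a * b - a - b) - a * b = 0 := by nlinarith
    have ha2 : a = 2 := by
      by_contra h
      have h3 : 3 ≤ a := by omega
      nlinarith
    subst ha2
    have hb3 : b = 3 := by omega
    subst hb3
    norm_num at hkz
    have hu6 : u = 6 := by omega
    exact ⟨Or.inr (Or.inr hu6), fun _ => ⟨rfl, rfl⟩⟩
  · -- M ≥ 2 case
    have hu3 : u ≤ 3 := by
      by_contra h
      push_neg at h
      have h7 : 7 * (a * b - a - b) ≤ 2 * (a * b) - 1 := by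
        nlinarith [mul_nonneg (by linarith : (0:ℤ) ≤ 2 * u - 8)
          (by linarith : (0:ℤ) ≤ a * b - a - b)]
      have h5 : 5 * (a * b) + 1 ≤ 7 * a + 7 * b := by nlinarith
      rcases (by omega : a = 2 ∨ 3 ≤ a) with h2 | h3
      · subst h2
        have hb4 : b = 3 ∨ b = 4 := by omega
        rcases hb4 with hbv | hbv
        · subst hbv; omega
        · subst hbv; exact absurd hg1 (by decide)
      · nlinarith [mul_nonneg (by linarith : (0:ℤ) ≤ a - 3) (by linarith : (0:ℤ) ≤ b)]
    exact ⟨by omega, by omega⟩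
end

section
/- Call a quadruple of integers (a,b,u,v), with b > a ≥ 2 and u,v ≥ 2, admissible if: (1) a, b and uv−1 are pairwise coprime; (2) 1/a + 1/b + v/(uv−1) > 1 as rational numbers; (3) v·a·b − 1 = (uv−1)·(ab − a − b). If (a,b,u,v) is admissible and u = 2, then 2 ≤ a ≤ 5; if (a,b,u,v) is admissible and u = 3, then a = 2 or a = 3. -/
theorem stmt_12 (a b u v : ℤ) (hadm : Admissible a b u v) :
    (u = 2 → 2 ≤ a ∧ a ≤ 5) ∧ (u = 3 → a = 2 ∨ a = 3) := by
  obtain ⟨ha, hab, hu, hv, -, -, -, hq, -⟩ := hadm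
  have hB : (a:ℚ) < b := by exact_mod_cast hab
  have hV : (2:ℚ) ≤ v := by exact_mod_cast hv
  constructor
  · intro hu2; subst hu2
    refine ⟨ha, ?_⟩
    by_contra h
    push_neg at h
    have hA : (6:ℚ) ≤ a := by exact_mod_cast h
    have hA0 : (0:ℚ) < a := by linarith
    have hB0 : (0:ℚ) < b := by linarith
    have hden : (0:ℚ) < 2 * v - 1 := by linarith
    push_cast at hq
    have h1 : (1:ℚ)/a ≤ 1/6 := by
      rw [div_le_div_iff₀ hA0 (by norm_num)]; linarith
    have h2 : (1:ℚ)/b < 1/6 := by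
      rw [div_lt_div_iff₀ hB0 (by norm_num)]; linarith
    have h3 : (v:ℚ)/(2 * v - 1) ≤ 2/3 := by
      rw [div_le_div_iff₀ hden (by norm_num)]; linarith
    linarith
  · intro hu3; subst hu3
    have h4 : a ≤ 3 := by
      by_contra h
      push_neg at h
      have hA : (4:ℚ) ≤ a := by exact_mod_cast h
      have hA0 : (0:ℚ) < a := by linarith
      have hB0 : (0:ℚ) < b := by linarith
      have hden : (0:ℚ) < 3 * v - 1 := by linarith
      push_cast at hq
      have h1 : (1:ℚ)/a ≤ 1/4 := by
        rw [div_le_div_iff₀ hA0 (by norm_num)]; linarith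
      have h2 : (1:ℚ)/b < 1/4 := by
        rw [div_lt_div_iff₀ hB0 (by norm_num)]; linarith
      have h3 : (v:ℚ)/(3 * v - 1) ≤ 2/5 := by
        rw [div_le_div_iff₀ hden (by norm_num)]; linarith
      linarith
    omega
end

section
/- Call a quadruple of integers (a,b,u,v), with b > a ≥ 2 and u,v ≥ 2, admissible if: (1) a, b and uv−1 are pairwise coprime; (2) 1/a + 1/b + v/(uv−1) > 1 as rational numbers; (3) v·a·b − 1 = (uv−1)·(ab − a − b). The admissible quadruples with u = 3 are exactly (a,b,v) ∈ {(2,9,2), (2,7,4)}; equivalently, the corresponding triples (a, b, 3v−1) are (2,9,5) and (2,7,11). -/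
theorem stmt_18 (a b v : ℤ) :
    Admissible a b 3 v ↔ ((a = 2 ∧ b = 9 ∧ v = 2) ∨ (a = 2 ∧ b = 7 ∧ v = 4)) := by
  constructor
  · rintro ⟨ha, hab, hu, hv, hg1, hg2, hg3, hineq, heq⟩
    have hb9 : b ≤ 9 := by
      by_contra hb
      push_neg at hb
      have hA : (2 : ℚ) ≤ (a : ℚ) := by exact_mod_cast ha
      have hB : (10 : ℚ) ≤ (b : ℚ) := by exact_mod_cast hb
      have hV : (2 : ℚ) ≤ (v : ℚ) := by exact_mod_cast hv
      have h1 : (1 : ℚ) / (a : ℚ) ≤ 1 / 2 :=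
        one_div_le_one_div_of_le (by norm_num) hA
      have h2 : (1 : ℚ) / (b : ℚ) ≤ 1 / 10 :=
        one_div_le_one_div_of_le (by norm_num) hB
      have h3 : (v : ℚ) / (((3 : ℤ) : ℚ) * v - 1) ≤ 2 / 5 := by
        rw [div_le_div_iff₀ (by push_cast; linarith) (by norm_num)]
        push_cast
        linarith
      linarith
    have hb3 : 3 ≤ b := by omega
    have ha8 : a ≤ 8 := by omega
    interval_cases b <;> interval_cases a <;> omega
  · rintro (⟨rfl, rfl, rfl⟩ | ⟨rfl, rfl, rfl⟩) <;>
      refine ⟨by norm_num, by norm_num, by norm_num, by norm_num, by decide, by decide,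
        by decide, by norm_num, by norm_num⟩
end
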